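/- arXiv:2603.15099 — 2 statements merged into one kernel-verified Lean document; each statement's English description precedes it below -/
import Mathlib

section
/- Let E be a relational expression, and let M₁ and M₂ be databases that differ only in domains (i.e., r^{M₁} = r^{M₂} as sets of tuples with values in U, for every r ∈ R). Then ‖E‖_{M₁} = ‖E‖_{M₂}. -/
variable {R : Type} {δ : R → ℕ} {𝒳 : Type} {U : Type}

/-- A database over `U`: a nonempty finite domain `D ⊆ U` together with an
interpretation `r^M ⊆ D^{δ(r)}` of every relation symbol. -/
structure DB (U : Type) (R : Type) (δ : R → ℕ) where
  dom : Set U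
  dom_nonempty : dom.Nonempty
  dom_finite : dom.Finite
  int : ∀ r : R, Set (Fin (δ r) → U)
  int_mem : ∀ r, ∀ t ∈ int r, ∀ i, t i ∈ dom

/-- Relational expressions over the database scheme assigning to each relation
symbol `r` the canonical pairwise-distinct variables `Y r`. Each expression is
indexed by its relation scheme. -/
inductive RExpr (R : Type) (δ : R → ℕ) (𝒳 : Type) (Y : ∀ r : R, Fin (δ r) → 𝒳) :
    Set 𝒳 → Type
  | dee : RExpr R δ 𝒳 Y ∅
  | rel (r : R) : RExpr R δ 𝒳 Y (Set.range (Y r))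
  | union {S : Set 𝒳} : RExpr R δ 𝒳 Y S → RExpr R δ 𝒳 Y S → RExpr R δ 𝒳 Y S
  | diff {S : Set 𝒳} : RExpr R δ 𝒳 Y S → RExpr R δ 𝒳 Y S → RExpr R δ 𝒳 Y S
  | join {S₁ S₂ : Set 𝒳} : RExpr R δ 𝒳 Y S₁ → RExpr R δ 𝒳 Y S₂ →
      RExpr R δ 𝒳 Y (S₁ ∪ S₂)
  | proj {S : Set 𝒳} (S' : Set 𝒳) (h : S' ⊆ S) : RExpr R δ 𝒳 Y S → RExpr R δ 𝒳 Y S'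
  | sel {S : Set 𝒳} (x y : 𝒳) (hx : x ∈ S) (hy : y ∈ S) :
      RExpr R δ 𝒳 Y S → RExpr R δ 𝒳 Y S
  | ren {S : Set 𝒳} (x y : 𝒳) (hx : x ∈ S) (hy : y ∉ S) :
      RExpr R δ 𝒳 Y S → RExpr R δ 𝒳 Y ((S \ {x}) ∪ {y})

/-- Restriction of a tuple over `S` to a subscheme `S'`. -/
def restr {S' S : Set 𝒳} (h : S' ⊆ S) (t : S → U) : S' → U :=
  fun a => t ⟨a.1, h a.2⟩

/-- Renaming of the tuple `t` over `S`: variable `x` is renamed to `y`. -/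
def renTup [DecidableEq 𝒳] {S : Set 𝒳} (x y : 𝒳) (hx : x ∈ S)
    (t : S → U) : (↥((S \ {x}) ∪ {y})) → U :=
  fun z =>
    if h : z.1 = y then t ⟨x, hx⟩
    else t ⟨z.1, by
      rcases z.2 with h' | h'
      · exact h'.1
      · exact absurd h' h⟩

/-- The value `‖E‖_M` of a relational expression in the database `M`:
a relation over the scheme of `E`, whose tuples take values in the domain of `M`. -/
def valE [DecidableEq 𝒳] {Y : ∀ r : R, Fin (δ r) → 𝒳} (M : DB U R δ) :
    {S : Set 𝒳} → RExpr R δ 𝒳 Y S → Set (S → U)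
  | _, .dee => Set.univ
  | _, .rel r => {t | (fun i => t ⟨Y r i, Set.mem_range_self i⟩) ∈ M.int r}
  | _, .union E₁ E₂ => valE M E₁ ∪ valE M E₂
  | _, .diff E₁ E₂ => valE M E₁ \ valE M E₂
  | _, .join E₁ E₂ =>
      {t | restr Set.subset_union_left t ∈ valE M E₁ ∧
           restr Set.subset_union_right t ∈ valE M E₂}
  | _, .proj _ h E => restr h '' valE M E
  | _, .sel x y hx hy E => {t ∈ valE M E | t ⟨x, hx⟩ = t ⟨y, hy⟩}
  | _, .ren x y hx _ E => renTup x y hx '' valE M E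

/-- Two databases differ only in domains if their interpretations coincide. -/
def DiffOnlyDom (M₁ M₂ : DB U R δ) : Prop := ∀ r, M₁.int r = M₂.int r

theorem stmt5 {R : Type} [Fintype R] {δ : R → ℕ} {𝒳 : Type} [Fintype 𝒳]
    [DecidableEq 𝒳] {U : Type} (Y : ∀ r : R, Fin (δ r) → 𝒳)
    (hY : ∀ r, Function.Injective (Y r))
    {S : Set 𝒳} (E : RExpr R δ 𝒳 Y S) (M₁ M₂ : DB U R δ)
    (h : DiffOnlyDom M₁ M₂) :
    valE M₁ E = valE M₂ E := by
  induction E with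
  | dee => rfl
  | rel r => simp only [valE, h r]
  | union E₁ E₂ ih₁ ih₂ => simp only [valE, ih₁, ih₂]
  | diff E₁ E₂ ih₁ ih₂ => simp only [valE, ih₁, ih₂]
  | join E₁ E₂ ih₁ ih₂ => simp only [valE, ih₁, ih₂]
  | proj S' hS E ih => simp only [valE, ih]
  | sel x y hx hy E ih => simp only [valE, ih]
  | ren x y hx hy E ih => simp only [valE, ih]
end

section
/- Every allowed formula is domain independent. -/
variable {R : Type} {δ : R → ℕ} {𝒳 : Type} {U : Type}

/-- First-order formulas over relation symbols `R` with arities `δ` and variables `𝒳`. -/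
inductive Fml (R : Type) (δ : R → ℕ) (𝒳 : Type) : Type
  | one : Fml R δ 𝒳
  | rel (r : R) (x : Fin (δ r) → 𝒳) : Fml R δ 𝒳
  | eql (x y : 𝒳) : Fml R δ 𝒳
  | not (φ : Fml R δ 𝒳) : Fml R δ 𝒳
  | and (φ ψ : Fml R δ 𝒳) : Fml R δ 𝒳
  | or (φ ψ : Fml R δ 𝒳) : Fml R δ 𝒳
  | ex (x : 𝒳) (φ : Fml R δ 𝒳) : Fml R δ 𝒳

/-- Free variables of a formula. -/
def FV [DecidableEq 𝒳] [Fintype 𝒳] : Fml R δ 𝒳 → Finset 𝒳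
  | .one => ∅
  | .rel _ x => Finset.univ.image x
  | .eql x y => {x, y}
  | .not φ => FV φ
  | .and φ ψ => FV φ ∪ FV ψ
  | .or φ ψ => FV φ ∪ FV ψ
  | .ex x φ => FV φ \ {x}

/-- The value `‖φ‖_M ⊆ D^𝒳` of a formula in the database `M`; valuations are
functions `𝒳 → U` taking values in the domain of `M`. -/
def valD (M : DB U R δ) : Fml R δ 𝒳 → Set (𝒳 → U)
  | .one => {v | ∀ z, v z ∈ M.dom}
  | .rel r x => {v | (∀ z, v z ∈ M.dom) ∧ (fun i => v (x i)) ∈ M.int r}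
  | .eql x y => {v | (∀ z, v z ∈ M.dom) ∧ v x = v y}
  | .not φ => {v | ∀ z, v z ∈ M.dom} \ valD M φ
  | .and φ ψ => valD M φ ∩ valD M ψ
  | .or φ ψ => valD M φ ∪ valD M ψ
  | .ex x φ => {v | (∀ z, v z ∈ M.dom) ∧ ∃ u ∈ valD M φ, ∀ y ≠ x, u y = v y}

/-- Projection of a set of valuations onto a set `X` of variables. -/
def projU (X : Set 𝒳) (V : Set (𝒳 → U)) : Set (X → U) :=
  (fun (v : 𝒳 → U) (a : X) => v a.1) '' V

/-- A formula is domain independent if its value, projected onto its free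
variables, is the same in any two databases that differ only in domains. -/
def DomIndep [DecidableEq 𝒳] [Fintype 𝒳] (U : Type) (φ : Fml R δ 𝒳) : Prop :=
  ∀ M₁ M₂ : DB U R δ, DiffOnlyDom M₁ M₂ →
    projU (↑(FV φ) : Set 𝒳) (valD M₁ φ) = projU (↑(FV φ) : Set 𝒳) (valD M₂ φ)

/-- `epsD M T`: all valuations of `M` whose restriction to `S` lies in `T`. -/
def epsD (M : DB U R δ) {S : Set 𝒳} (T : Set (S → U)) : Set (𝒳 → U) :=
  {v | (∀ z, v z ∈ M.dom) ∧ (fun a : S => v a.1) ∈ T}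

/-- The identity relation on `𝒳` (as a set of pairs). -/
def idRel' : Set (𝒳 × 𝒳) := {p | p.1 = p.2}

/-- `EqGen R₀`: the smallest equivalence relation on `𝒳` containing `R₀`. -/
def EqGen (R₀ : Set (𝒳 × 𝒳)) : Set (𝒳 × 𝒳) :=
  {p | Relation.EqvGen (fun a b => (a, b) ∈ R₀) p.1 p.2}

/-- `(𝒳∖{x}) × (𝒳∖{x})` as a set of pairs. -/
def offDiag (x : 𝒳) : Set (𝒳 × 𝒳) := {p | p.1 ≠ x ∧ p.2 ≠ x}

/-- The pair `(eq(φ), coeq(φ))` of the equality and coequality equivalences of `φ`. -/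
def eqco : Fml R δ 𝒳 → Set (𝒳 × 𝒳) × Set (𝒳 × 𝒳)
  | .one => (idRel', idRel')
  | .rel _ _ => (idRel', idRel')
  | .eql x y => (EqGen {(x, y)}, idRel')
  | .not φ => ((eqco φ).2, (eqco φ).1)
  | .and φ ψ => (EqGen ((eqco φ).1 ∪ (eqco ψ).1), (eqco φ).2 ∩ (eqco ψ).2)
  | .or φ ψ => ((eqco φ).1 ∩ (eqco ψ).1, EqGen ((eqco φ).2 ∪ (eqco ψ).2))
  | .ex x φ => (EqGen ((eqco φ).1 ∩ offDiag x), EqGen ((eqco φ).2 ∩ offDiag x))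

/-- `eq(φ)`. -/
def eqR (φ : Fml R δ 𝒳) : Set (𝒳 × 𝒳) := (eqco φ).1

/-- `coeq(φ)`. -/
def coeqR (φ : Fml R δ 𝒳) : Set (𝒳 × 𝒳) := (eqco φ).2

/-- `cl_E(X)`. -/
def clE (E : Set (𝒳 × 𝒳)) (X : Set 𝒳) : Set 𝒳 := {y | ∃ x ∈ X, (x, y) ∈ E}

/-- The pair `(gen₀(φ), cogen₀(φ))`. -/
def genco0 : Fml R δ 𝒳 → Set 𝒳 × Set 𝒳
  | .one => (∅, ∅)
  | .rel _ x => (Set.range x, ∅)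
  | .eql _ _ => (∅, ∅)
  | .not φ => ((genco0 φ).2, (genco0 φ).1)
  | .and φ ψ =>
      (clE (eqR (φ.and ψ)) ((genco0 φ).1 ∪ (genco0 ψ).1),
       (genco0 φ).2 ∩ (genco0 ψ).2)
  | .or φ ψ =>
      ((genco0 φ).1 ∩ (genco0 ψ).1,
       clE (EqGen (coeqR φ ∪ coeqR ψ)) ((genco0 φ).2 ∪ (genco0 ψ).2))
  | .ex x φ => ((genco0 φ).1 \ {x}, (genco0 φ).2 \ {x})

/-- `gen₀(φ)`. -/
def gen0 (φ : Fml R δ 𝒳) : Set 𝒳 := (genco0 φ).1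

/-- Every subformula of the form `(∃x)ψ` satisfies `x ∈ gen₀(ψ)`. -/
def ExOK : Fml R δ 𝒳 → Prop
  | .one => True
  | .rel _ _ => True
  | .eql _ _ => True
  | .not φ => ExOK φ
  | .and φ ψ => ExOK φ ∧ ExOK ψ
  | .or φ ψ => ExOK φ ∧ ExOK ψ
  | .ex x φ => x ∈ gen0 φ ∧ ExOK φ

/-- A formula is allowed if `FV(φ) = gen₀(φ)` and every existential subformula
`(∃x)ψ` satisfies `x ∈ gen₀(ψ)`. -/
def Allowed [DecidableEq 𝒳] [Fintype 𝒳] (φ : Fml R δ 𝒳) : Prop :=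
  (↑(FV φ) : Set 𝒳) = gen0 φ ∧ ExOK φ

section Aux

variable {R : Type} {δ : R → ℕ} {𝒳 : Type} {U : Type}

/-- The active domain of a database: all values occurring in some relation. -/
def adom (M : DB U R δ) : Set U := {u | ∃ r, ∃ t ∈ M.int r, ∃ i, t i = u}

lemma adom_subset (M : DB U R δ) : adom M ⊆ M.dom := by
  rintro u ⟨r, t, ht, i, rfl⟩
  exact M.int_mem r t ht i

lemma adom_eq {M₁ M₂ : DB U R δ} (h : DiffOnlyDom M₁ M₂) : adom M₁ = adom M₂ := by
  have h' : ∀ r, M₁.int r = M₂.int r := h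
  unfold adom
  simp only [h']

lemma valD_dom {M : DB U R δ} :
    ∀ {φ : Fml R δ 𝒳} {v : 𝒳 → U}, v ∈ valD M φ → ∀ z, v z ∈ M.dom := by
  intro φ
  induction φ with
  | one => intro v hv; exact hv
  | rel r x => intro v hv; exact hv.1
  | eql x y => intro v hv; exact hv.1
  | not φ ih => intro v hv; exact hv.1
  | and φ ψ ihφ ihψ => intro v hv; exact ihφ hv.1
  | or φ ψ ihφ ihψ => intro v hv; rcases hv with hv | hv; exacts [ihφ hv, ihψ hv]
  | ex x φ ih => intro v hv; exact hv.1

lemma eqGen_eq {v : 𝒳 → U} {R₀ : Set (𝒳 × 𝒳)}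
    (h : ∀ p ∈ R₀, v p.1 = v p.2) : ∀ p ∈ EqGen R₀, v p.1 = v p.2 := by
  rintro ⟨a, b⟩ hab
  simp only [EqGen, Set.mem_setOf_eq] at hab
  induction hab with
  | rel a b h' => exact h (a, b) h'
  | refl => rfl
  | symm _ _ _ ih => exact ih.symm
  | trans _ _ _ _ _ ih1 ih2 => exact ih1.trans ih2

lemma eqco_spec {M : DB U R δ} :
    ∀ (φ : Fml R δ 𝒳) (v : 𝒳 → U),
      (v ∈ valD M φ → ∀ p ∈ (eqco φ).1, v p.1 = v p.2) ∧
      ((∀ z, v z ∈ M.dom) → v ∉ valD M φ → ∀ p ∈ (eqco φ).2, v p.1 = v p.2) := by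
  intro φ
  induction φ with
  | one =>
      intro v
      refine ⟨fun _ p hp => ?_, fun _ _ p hp => ?_⟩ <;>
        · simp only [eqco, idRel', Set.mem_setOf_eq] at hp
          rw [hp]
  | rel r x =>
      intro v
      refine ⟨fun _ p hp => ?_, fun _ _ p hp => ?_⟩ <;>
        · simp only [eqco, idRel', Set.mem_setOf_eq] at hp
          rw [hp]
  | eql x y =>
      intro v
      constructor
      · intro hv p hp
        refine eqGen_eq (fun q hq => ?_) p hp
        simp only [Set.mem_singleton_iff] at hq
        subst hq
        exact hv.2
      · intro _ _ p hp
        simp only [eqco, idRel', Set.mem_setOf_eq] at hp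
        rw [hp]
  | not φ ih =>
      intro v
      constructor
      · intro hv p hp
        exact (ih v).2 hv.1 hv.2 p hp
      · intro hd hv p hp
        have : v ∈ valD M φ := by
          by_contra h
          exact hv ⟨hd, h⟩
        exact (ih v).1 this p hp
  | and φ ψ ihφ ihψ =>
      intro v
      constructor
      · intro hv p hp
        refine eqGen_eq (fun q hq => ?_) p hp
        rcases hq with hq | hq
        · exact (ihφ v).1 hv.1 q hq
        · exact (ihψ v).1 hv.2 q hq
      · intro hd hv p hp
        by_cases h : v ∈ valD M φ
        · have : v ∉ valD M ψ := fun h' => hv ⟨h, h'⟩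
          exact (ihψ v).2 hd this p hp.2
        · exact (ihφ v).2 hd h p hp.1
  | or φ ψ ihφ ihψ =>
      intro v
      constructor
      · intro hv p hp
        rcases hv with hv | hv
        · exact (ihφ v).1 hv p hp.1
        · exact (ihψ v).1 hv p hp.2
      · intro hd hv p hp
        have h1 : v ∉ valD M φ := fun h => hv (Or.inl h)
        have h2 : v ∉ valD M ψ := fun h => hv (Or.inr h)
        refine eqGen_eq (fun q hq => ?_) p hp
        rcases hq with hq | hq
        · exact (ihφ v).2 hd h1 q hq
        · exact (ihψ v).2 hd h2 q hq
  | ex x φ ih =>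
      intro v
      constructor
      · rintro ⟨hd, u, hu, hag⟩ p hp
        refine eqGen_eq (fun q hq => ?_) p hp
        have h1 : u q.1 = u q.2 := (ih u).1 hu q hq.1
        rw [← hag q.1 hq.2.1, ← hag q.2 hq.2.2]
        exact h1
      · intro hd hv p hp
        have hvφ : v ∉ valD M φ := by
          intro h
          exact hv ⟨hd, v, h, fun y _ => rfl⟩
        refine eqGen_eq (fun q hq => ?_) p hp
        exact (ih v).2 hd hvφ q hq.1

lemma gen0_spec {M : DB U R δ} :
    ∀ (φ : Fml R δ 𝒳) (v : 𝒳 → U),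
      (v ∈ valD M φ → ∀ x ∈ (genco0 φ).1, v x ∈ adom M) ∧
      ((∀ z, v z ∈ M.dom) → v ∉ valD M φ → ∀ x ∈ (genco0 φ).2, v x ∈ adom M) := by
  intro φ
  induction φ with
  | one =>
      intro v
      exact ⟨fun _ x hx => absurd hx (Set.notMem_empty x),
             fun _ _ x hx => absurd hx (Set.notMem_empty x)⟩
  | rel r y =>
      intro v
      constructor
      · intro hv x hx
        obtain ⟨i, rfl⟩ := hx
        exact ⟨r, _, hv.2, i, rfl⟩
      · intro _ _ x hx
        exact absurd hx (Set.notMem_empty x)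
  | eql x y =>
      intro v
      exact ⟨fun _ x hx => absurd hx (Set.notMem_empty x),
             fun _ _ x hx => absurd hx (Set.notMem_empty x)⟩
  | not φ ih =>
      intro v
      constructor
      · intro hv x hx
        exact (ih v).2 hv.1 hv.2 x hx
      · intro hd hv x hx
        have : v ∈ valD M φ := by
          by_contra h
          exact hv ⟨hd, h⟩
        exact (ih v).1 this x hx
  | and φ ψ ihφ ihψ =>
      intro v
      constructor
      · intro hv x hx
        obtain ⟨y, hy, hyx⟩ := hx
        have heq : v y = v x := (eqco_spec (φ.and ψ) v).1 hv (y, x) hyx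
        rw [← heq]
        rcases hy with hy | hy
        · exact (ihφ v).1 hv.1 y hy
        · exact (ihψ v).1 hv.2 y hy
      · intro hd hv x hx
        by_cases h : v ∈ valD M φ
        · have : v ∉ valD M ψ := fun h' => hv ⟨h, h'⟩
          exact (ihψ v).2 hd this x hx.2
        · exact (ihφ v).2 hd h x hx.1
  | or φ ψ ihφ ihψ =>
      intro v
      constructor
      · intro hv x hx
        rcases hv with hv | hv
        · exact (ihφ v).1 hv x hx.1
        · exact (ihψ v).1 hv x hx.2
      · intro hd hv x hx
        have h1 : v ∉ valD M φ := fun h => hv (Or.inl h)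
        have h2 : v ∉ valD M ψ := fun h => hv (Or.inr h)
        obtain ⟨y, hy, hyx⟩ := hx
        have heq : v y = v x := (eqco_spec (φ.or ψ) v).2 hd hv (y, x) hyx
        rw [← heq]
        rcases hy with hy | hy
        · exact (ihφ v).2 hd h1 y hy
        · exact (ihψ v).2 hd h2 y hy
  | ex x φ ih =>
      intro v
      constructor
      · rintro ⟨hd, u, hu, hag⟩ y hy
        have h1 : u y ∈ adom M := (ih u).1 hu y hy.1
        rw [← hag y hy.2]
        exact h1
      · intro hd hv y hy
        have hvφ : v ∉ valD M φ := by
          intro h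
          exact hv ⟨hd, v, h, fun z _ => rfl⟩
        exact (ih v).2 hd hvφ y hy.1

lemma key_lemma [Fintype 𝒳] [DecidableEq 𝒳] :
    ∀ (φ : Fml R δ 𝒳), ExOK φ → ∀ (M₁ M₂ : DB U R δ), DiffOnlyDom M₁ M₂ →
      ∀ v w : 𝒳 → U, (∀ z, v z ∈ M₁.dom) → (∀ z, w z ∈ M₂.dom) →
      (∀ y ∈ FV φ, v y = w y) → (v ∈ valD M₁ φ ↔ w ∈ valD M₂ φ) := by
  intro φ
  induction φ with
  | one =>
      intro _ M₁ M₂ _ v w hv hw _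
      simp only [valD, Set.mem_setOf_eq]
      exact ⟨fun _ => hw, fun _ => hv⟩
  | rel r x =>
      intro _ M₁ M₂ hdiff v w hv hw hag
      have hx : ∀ i, v (x i) = w (x i) := fun i =>
        hag (x i) (Finset.mem_image_of_mem x (Finset.mem_univ i))
      simp only [valD, Set.mem_setOf_eq]
      constructor
      · rintro ⟨_, h⟩
        refine ⟨hw, ?_⟩
        rw [← hdiff r]
        convert h using 1
        funext i
        exact (hx i).symm
      · rintro ⟨_, h⟩
        refine ⟨hv, ?_⟩
        rw [hdiff r]
        convert h using 1
        funext i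
        exact hx i
  | eql x y =>
      intro _ M₁ M₂ _ v w hv hw hag
      have hx : v x = w x := hag x (by simp [FV])
      have hy : v y = w y := hag y (by simp [FV])
      simp only [valD, Set.mem_setOf_eq]
      constructor
      · rintro ⟨_, h⟩
        exact ⟨hw, by rw [← hx, ← hy]; exact h⟩
      · rintro ⟨_, h⟩
        exact ⟨hv, by rw [hx, hy]; exact h⟩
  | not φ ih =>
      intro hok M₁ M₂ hdiff v w hv hw hag
      have := ih hok M₁ M₂ hdiff v w hv hw hag
      simp only [valD, Set.mem_diff, Set.mem_setOf_eq]
      constructor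
      · rintro ⟨_, h⟩; exact ⟨hw, fun h' => h (this.mpr h')⟩
      · rintro ⟨_, h⟩; exact ⟨hv, fun h' => h (this.mp h')⟩
  | and φ ψ ihφ ihψ =>
      intro hok M₁ M₂ hdiff v w hv hw hag
      have h1 := ihφ hok.1 M₁ M₂ hdiff v w hv hw
        (fun y hy => hag y (Finset.mem_union_left _ hy))
      have h2 := ihψ hok.2 M₁ M₂ hdiff v w hv hw
        (fun y hy => hag y (Finset.mem_union_right _ hy))
      exact ⟨fun h => ⟨h1.mp h.1, h2.mp h.2⟩, fun h => ⟨h1.mpr h.1, h2.mpr h.2⟩⟩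
  | or φ ψ ihφ ihψ =>
      intro hok M₁ M₂ hdiff v w hv hw hag
      have h1 := ihφ hok.1 M₁ M₂ hdiff v w hv hw
        (fun y hy => hag y (Finset.mem_union_left _ hy))
      have h2 := ihψ hok.2 M₁ M₂ hdiff v w hv hw
        (fun y hy => hag y (Finset.mem_union_right _ hy))
      constructor
      · rintro (h | h); exacts [Or.inl (h1.mp h), Or.inr (h2.mp h)]
      · rintro (h | h); exacts [Or.inl (h1.mpr h), Or.inr (h2.mpr h)]
  | ex x φ ih =>
      intro hok M₁ M₂ hdiff v w hv hw hag
      have fwd : ∀ (N₁ N₂ : DB U R δ), DiffOnlyDom N₁ N₂ →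
          ∀ v w : 𝒳 → U, (∀ z, v z ∈ N₁.dom) → (∀ z, w z ∈ N₂.dom) →
          (∀ y ∈ FV (Fml.ex x φ), v y = w y) →
          v ∈ valD N₁ (Fml.ex x φ) → w ∈ valD N₂ (Fml.ex x φ) := by
        intro N₁ N₂ hd v w hv hw hag hmem
        obtain ⟨_, u, hu, huag⟩ := hmem
        have hux : u x ∈ adom N₁ := (gen0_spec φ u).1 hu x hok.1
        classical
        set u' : 𝒳 → U := Function.update w x (u x) with hu'
        have hu'dom : ∀ z, u' z ∈ N₂.dom := by
          intro z
          by_cases hz : z = x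
          · subst hz
            simp only [u', Function.update_self]
            exact adom_subset N₂ (adom_eq hd ▸ hux)
          · simp only [u', Function.update_of_ne hz]
            exact hw z
        have hagu : ∀ y ∈ FV φ, u y = u' y := by
          intro y hy
          by_cases hyx : y = x
          · subst hyx
            simp [u']
          · have hyF : y ∈ FV (Fml.ex x φ) := by
              simp only [FV, Finset.mem_sdiff, Finset.mem_singleton]
              exact ⟨hy, hyx⟩
            rw [huag y hyx, hag y hyF]
            simp [u', Function.update_of_ne hyx]
        have : u' ∈ valD N₂ φ :=
          (ih hok.2 N₁ N₂ hd u u' (valD_dom hu) hu'dom hagu).mp hu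
        exact ⟨hw, u', this, fun y hyx => Function.update_of_ne hyx _ _⟩
      have hag' : ∀ y ∈ FV (Fml.ex x φ), w y = v y := fun y hy => (hag y hy).symm
      exact ⟨fwd M₁ M₂ hdiff v w hv hw hag,
             fwd M₂ M₁ (fun r => (hdiff r).symm) w v hw hv hag'⟩

end Aux

theorem stmt19 {R : Type} [Fintype R] {δ : R → ℕ} {𝒳 : Type} [Fintype 𝒳]
    [DecidableEq 𝒳] {U : Type} (φ : Fml R δ 𝒳) (hφ : Allowed φ) :
    DomIndep U φ := by
  obtain ⟨hFV, hok⟩ := hφ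
  have main : ∀ N₁ N₂ : DB U R δ, DiffOnlyDom N₁ N₂ →
      projU (↑(FV φ) : Set 𝒳) (valD N₁ φ) ⊆ projU (↑(FV φ) : Set 𝒳) (valD N₂ φ) := by
    intro N₁ N₂ hd f hf
    obtain ⟨v, hv, rfl⟩ := hf
    obtain ⟨d₂, hd₂⟩ := N₂.dom_nonempty
    classical
    set w : 𝒳 → U := fun y => if y ∈ FV φ then v y else d₂ with hw
    have hwdom : ∀ z, w z ∈ N₂.dom := by
      intro z
      by_cases hz : z ∈ FV φ
      · have hz' : z ∈ gen0 φ := by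
          rw [← hFV]
          exact hz
        have : v z ∈ adom N₁ := (gen0_spec φ v).1 hv z hz'
        simp only [w, if_pos hz]
        exact adom_subset N₂ (adom_eq hd ▸ this)
      · simp only [w, if_neg hz]
        exact hd₂
    have hag : ∀ y ∈ FV φ, v y = w y := by
      intro y hy
      simp only [w, if_pos hy]
    have hwmem : w ∈ valD N₂ φ :=
      (key_lemma φ hok N₁ N₂ hd v w (valD_dom hv) hwdom hag).mp hv
    refine ⟨w, hwmem, ?_⟩
    funext a
    have ha : a.1 ∈ FV φ := a.2
    simp only [w, if_pos ha]
  intro M₁ M₂ hdiff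
  exact Set.Subset.antisymm (main M₁ M₂ hdiff) (main M₂ M₁ (fun r => (hdiff r).symm))
end
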